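/- Rounding a fractional satisfying point: let c : {−1,1}^n → {0,1} be a Boolean function and a ∈ [−1,1]^n with WFE_c(a) = 1. Then every b ∈ {−1,1}^n with S_a(b) > 0 satisfies c(b) = 1; that is, any rounding of a that is consistent with the ±1 coordinates of a yields a satisfying assignment of c. -/

import Mathlib

open Finset

/-- Map a Bool vector to a ±1 real vector: `true` (logical True) ↦ -1, `false` ↦ 1. -/
noncomputable def toPM {n : ℕ} (b : Fin n → Bool) : Fin n → ℝ :=
  fun i => if b i then -1 else 1

/-- Walsh–Fourier coefficient ĝ(S) = 2^{-n} · Σ_{b∈{-1,1}^n} g(b) · ∏_{i∈S} b_i. -/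
noncomputable def wfCoeff {n : ℕ} (g : (Fin n → Bool) → ℝ) (S : Finset (Fin n)) : ℝ :=
  (2 ^ n : ℝ)⁻¹ * ∑ b : Fin n → Bool, g b * ∏ i ∈ S, toPM b i

/-- Walsh–Fourier expansion (multilinear extension) of g. -/
noncomputable def WFE {n : ℕ} (g : (Fin n → Bool) → ℝ) (x : Fin n → ℝ) : ℝ :=
  ∑ S : Finset (Fin n), wfCoeff g S * ∏ i ∈ S, x i

/-- Real {0,1} value of a Boolean function (1 = True). -/
noncomputable def bval {n : ℕ} (c : (Fin n → Bool) → Bool) : (Fin n → Bool) → ℝ :=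
  fun b => if c b then 1 else 0

/-- Rounding distribution S_a(b) = ∏_{b_i = -1} (1-a_i)/2 · ∏_{b_i = +1} (1+a_i)/2. -/
noncomputable def roundProb {n : ℕ} (a : Fin n → ℝ) (b : Fin n → Bool) : ℝ :=
  ∏ i, if b i then (1 - a i) / 2 else (1 + a i) / 2

/-- Circuit-output probability COP(P,c). -/
noncomputable def COP {n : ℕ} (P : Fin n → ℝ) (c : (Fin n → Bool) → Bool) : ℝ :=
  ∑ b : Fin n → Bool, bval c b * ∏ i, (if b i then P i else 1 - P i)

/-!
Expanding `∏ i, (1 + bᵢ aᵢ) / 2` over subsets shows that `roundProb a` is the law whose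
expectation of any `g` is `WFE g a`. Since `roundProb a` is a probability distribution when
`a ∈ [-1,1]ⁿ` and `bval c ≤ 1`, the value `WFE (bval c) a = 1` forces `bval c b = 1` wherever
`roundProb a b > 0`.
-/

lemma eq_one_of_sum_mul_eq_sum {ι : Type*} [Fintype ι] {p f : ι → ℝ} (hp : ∀ i, 0 ≤ p i)
    (hf : ∀ i, f i ≤ 1) (h : ∑ i, f i * p i = ∑ i, p i) {i : ι} (hi : 0 < p i) : f i = 1 := by
  have hzero : ∑ j, (1 - f j) * p j = 0 := by
    simp only [sub_mul, one_mul, sum_sub_distrib, h, sub_self]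
  have hterm := (sum_eq_zero_iff_of_nonneg fun j _ =>
    mul_nonneg (sub_nonneg.2 (hf j)) (hp j)).1 hzero i (mem_univ i)
  linarith [(mul_eq_zero.1 hterm).resolve_right hi.ne']

lemma roundProb_eq_prod {n : ℕ} (a : Fin n → ℝ) (b : Fin n → Bool) :
    roundProb a b = ∏ i, (1 + toPM b i * a i) / 2 :=
  prod_congr rfl fun i _ => by simp only [toPM]; split_ifs <;> ring

lemma roundProb_eq_sum_powerset {n : ℕ} (a : Fin n → ℝ) (b : Fin n → Bool) :
    roundProb a b = (2 ^ n : ℝ)⁻¹ * ∑ S : Finset (Fin n), (∏ i ∈ S, toPM b i) * ∏ i ∈ S, a i := by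
  rw [roundProb_eq_prod, prod_div_distrib, prod_const, card_univ, Fintype.card_fin,
    div_eq_inv_mul, prod_one_add, powerset_univ]
  simp only [prod_mul_distrib]

theorem sum_mul_roundProb {n : ℕ} (g : (Fin n → Bool) → ℝ) (a : Fin n → ℝ) :
    ∑ b, g b * roundProb a b = WFE g a := by
  simp only [WFE, wfCoeff, roundProb_eq_sum_powerset, mul_sum, sum_mul]
  rw [sum_comm]
  exact sum_congr rfl fun S _ => sum_congr rfl fun b _ => by ring

lemma roundProb_nonneg {n : ℕ} {a : Fin n → ℝ} (ha : ∀ i, a i ∈ Set.Icc (-1 : ℝ) 1)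
    (b : Fin n → Bool) : 0 ≤ roundProb a b :=
  prod_nonneg fun i _ => by
    obtain ⟨h₁, h₂⟩ := ha i
    split_ifs <;> linarith

lemma sum_roundProb {n : ℕ} (a : Fin n → ℝ) : ∑ b, roundProb a b = 1 := by
  simp only [roundProb]
  rw [← Fintype.prod_sum fun i (t : Bool) => if t then (1 - a i) / 2 else (1 + a i) / 2]
  exact prod_eq_one fun i _ => by rw [Fintype.sum_bool]; simp only [if_true, Bool.false_eq_true, if_false]; ring

lemma bval_le_one {n : ℕ} (c : (Fin n → Bool) → Bool) (b : Fin n → Bool) : bval c b ≤ 1 := by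
  unfold bval; split_ifs <;> norm_num

/-- Rounding a fractional satisfying point: any rounding of a with positive
probability satisfies c. -/
theorem rounding_fractional_solution {n : ℕ} (c : (Fin n → Bool) → Bool)
    (a : Fin n → ℝ) (ha : ∀ i, a i ∈ Set.Icc (-1 : ℝ) 1)
    (hW : WFE (bval c) a = 1) :
    ∀ b : Fin n → Bool, 0 < roundProb a b → c b = true := by
  intro b hb
  have hmean : ∑ b, bval c b * roundProb a b = ∑ b, roundProb a b := by
    rw [sum_mul_roundProb, sum_roundProb, hW]
  have hval := eq_one_of_sum_mul_eq_sum (roundProb_nonneg ha) (bval_le_one c) hmean hb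
  simpa [bval] using hval
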